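/- arXiv:1903.00872 — 3 statements merged into one kernel-verified Lean document; each statement's English description precedes it below -/
import Mathlib

section
/- Let ρ, ε > 0 with ρ ≥ 10ε and ε ≤ 1/10, and define R₀ = 0, R_{i+1} = (2/ρ)·(1/ε)^i + (5/ρ)·R_i, and δ_i = (1/ε)^i + 2·R_i. Then for every i ≥ 0, δ_i ≤ 2·(1/ε)^i. -/
theorem stmt_2 (ρ ε : ℝ) (hρ : 0 < ρ) (hε : 0 < ε) (hρε : ρ ≥ 10 * ε)
    (hε10 : ε ≤ 1 / 10) (R δ : ℕ → ℝ)
    (hR0 : R 0 = 0)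
    (hR : ∀ i : ℕ, R (i + 1) = (2 / ρ) * (1 / ε) ^ i + (5 / ρ) * R i)
    (hδ : ∀ i : ℕ, δ i = (1 / ε) ^ i + 2 * R i) :
    ∀ i : ℕ, δ i ≤ 2 * (1 / ε) ^ i := by
  have hεinv : (0:ℝ) < 1 / ε := by positivity
  have hpow : ∀ i : ℕ, (0:ℝ) < (1 / ε) ^ i := fun i => pow_pos hεinv i
  have hinvρ : 1 / ρ ≤ 1 / (10 * ε) := by
    apply one_div_le_one_div_of_le (by positivity) hρε
  have key : ∀ i : ℕ, 0 ≤ R i ∧ R i ≤ (1/2) * (1 / ε) ^ i := by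
    intro i
    induction i with
    | zero => simp [hR0]
    | succ n ih =>
      obtain ⟨h0, h1⟩ := ih
      constructor
      · rw [hR]; positivity
      · rw [hR]
        have e1 : (2 / ρ) * (1 / ε) ^ n ≤ (2 / (10 * ε)) * (1 / ε) ^ n := by
          apply mul_le_mul_of_nonneg_right _ (le_of_lt (hpow n))
          rw [div_le_div_iff₀ hρ (by positivity)]
          nlinarith
        have e2 : (5 / ρ) * R n ≤ (5 / (10 * ε)) * ((1/2) * (1 / ε) ^ n) := by
          apply mul_le_mul _ h1 h0 (by positivity)
          rw [div_le_div_iff₀ hρ (by positivity)]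
          nlinarith
        have : (2 / (10 * ε)) * (1 / ε) ^ n + (5 / (10 * ε)) * ((1/2) * (1 / ε) ^ n)
            ≤ (1/2) * (1 / ε) ^ (n + 1) := by
          rw [pow_succ]
          have hεne : ε ≠ 0 := ne_of_gt hε
          have h2 : (2 / (10 * ε)) = (1/5) * (1/ε) := by field_simp; ring
          have h5 : (5 / (10 * ε)) = (1/2) * (1/ε) := by field_simp; ring
          rw [h2, h5]
          nlinarith [mul_pos hεinv (hpow n)]
        linarith
  intro i
  rw [hδ]
  have := (key i).2
  linarith
end

section
/- Let G be a finite simple graph on vertex set V and S ⊆ V. For a vertex u and radius j, let Γ^(j)(u) = {v ∈ V : dist(u,v) ≤ j}. Suppose a process guarantees that after phase j, every vertex u knows at least min{d, |Γ^(j)(u) ∩ S|} elements of S within distance j, where knowledge at phase j of u is derived from knowledge at phase j−1 of u and of its neighbors (each neighbor forwarding up to d elements at exact distance j−1). Then by induction this invariant holds for all j ≥ 0 starting from the base that each u knows min{d, |Γ^(0)(u) ∩ S|} elements initially. -/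
lemma aux_exists_adj_dist {V : Type*} (G : SimpleGraph V) {u s : V} {j : ℕ}
    (h : G.dist u s = j + 1) : ∃ v, G.Adj u v ∧ G.dist v s = j := by
  obtain ⟨p, hp⟩ := SimpleGraph.exists_walk_of_dist_ne_zero (by omega : G.dist u s ≠ 0)
  rw [h] at hp
  cases p with
  | nil => simp at hp
  | @cons _ v _ hadj q =>
    refine ⟨v, hadj, le_antisymm ?_ ?_⟩
    · have := SimpleGraph.dist_le q
      simp only [SimpleGraph.Walk.length_cons] at hp
      omega
    · have hr : G.Reachable v s := q.reachable
      obtain ⟨w, hw⟩ := hr.exists_walk_length_eq_dist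
      have := SimpleGraph.dist_le (SimpleGraph.Walk.cons hadj w)
      simp only [SimpleGraph.Walk.length_cons, hw, h] at this
      omega

/-- Knowledge invariant for the popular-cluster-detection BFS (Lemma on "near neighbors").
`K j u` is the set of centers that vertex `u` knows about by the end of phase `j`. -/
theorem stmt_9 {V : Type*} [Fintype V] [DecidableEq V] (G : SimpleGraph V)
    [DecidableRel G.Adj] (S : Finset V) (d : ℕ) (hd : 1 ≤ d)
    (K : ℕ → V → Finset V)
    -- base: initially every vertex knows exactly the centers at distance 0 (itself, if a center)
    (hK0 : ∀ u : V, K 0 u = S.filter (fun s => G.dist u s ≤ 0))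
    -- soundness: everything known at phase j is a center within distance j
    (hsound : ∀ (j : ℕ) (u : V), K j u ⊆ S.filter (fun s => G.dist u s ≤ j))
    -- monotonicity: knowledge is never forgotten
    (hmono : ∀ (j : ℕ) (u : V), K j u ⊆ K (j + 1) u)
    -- forwarding: each neighbor `v` forwards to `u` at least
    -- `min d |{centers it knows at exact distance j}|` of those centers
    (hfwd : ∀ (j : ℕ) (u v : V), G.Adj u v →
      ∃ T : Finset V, T ⊆ (K j v).filter (fun s => G.dist v s = j) ∧
        T.card = min d ((K j v).filter (fun s => G.dist v s = j)).card ∧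
        T ⊆ K (j + 1) u) :
    ∀ (j : ℕ) (u : V),
      min d ((S.filter (fun s => G.dist u s ≤ j)).card) ≤ (K j u).card := by
  intro j
  induction j with
  | zero =>
    intro u
    rw [hK0 u]
    exact min_le_right _ _
  | succ j ih =>
    intro u
    by_cases hc : d ≤ (K (j+1) u).card
    · exact le_trans (min_le_left _ _) hc
    push_neg at hc
    have hKj : (K j u).card < d := lt_of_le_of_lt (Finset.card_le_card (hmono j u)) hc
    have hB : K j u = S.filter (fun s => G.dist u s ≤ j) := by
      refine Finset.eq_of_subset_of_card_le (hsound j u) ?_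
      have := ih u
      omega
    have hA : S.filter (fun s => G.dist u s ≤ j+1) ⊆ K (j+1) u := by
      intro s hs
      by_contra hsn
      have hsB : s ∉ K j u := fun h => hsn (hmono j u h)
      rw [hB, Finset.mem_filter] at hsB
      rw [Finset.mem_filter] at hs
      push_neg at hsB
      have hds : G.dist u s = j + 1 := by
        have := hsB hs.1
        have := hs.2
        omega
      obtain ⟨v, hadj, hdv⟩ := aux_exists_adj_dist G hds
      obtain ⟨T, hT1, hT2, hT3⟩ := hfwd j u v hadj
      set X := (K j v).filter (fun s => G.dist v s = j) with hX
      rcases le_or_gt d X.card with hX1 | hX1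
      · have : T.card = d := by omega
        have := Finset.card_le_card hT3
        omega
      · have hTX : T = X := Finset.eq_of_subset_of_card_le hT1 (by omega)
        rcases le_or_gt d (K j v).card with hKv | hKv
        · -- K j v ⊆ K (j+1) u, contradiction with hc
          have hsub : K j v ⊆ K (j+1) u := by
            intro x hx
            by_cases hxd : G.dist v x = j
            · exact hT3 (by rw [hTX, hX]; exact Finset.mem_filter.mpr ⟨hx, hxd⟩)
            · have hxS := hsound j v hx
              rw [Finset.mem_filter] at hxS
              apply hmono j u
              rw [hB, Finset.mem_filter]
              refine ⟨hxS.1, ?_⟩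
              by_cases hru : G.Reachable v x
              · obtain ⟨w, hw⟩ := hru.exists_walk_length_eq_dist
                have := SimpleGraph.dist_le (SimpleGraph.Walk.cons hadj w)
                simp only [SimpleGraph.Walk.length_cons, hw] at this
                omega
              · have hnux : ¬ G.Reachable u x := fun h => hru (hadj.symm.reachable.trans h)
                have h0 : G.dist u x = 0 :=
                  SimpleGraph.dist_eq_zero_iff_eq_or_not_reachable.mpr (Or.inr hnux)
                omega
          have := Finset.card_le_card hsub
          omega
        · -- K j v = all centers within distance j of v, contains s
          have hBv : K j v = S.filter (fun t => G.dist v t ≤ j) := by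
            refine Finset.eq_of_subset_of_card_le (hsound j v) ?_
            have := ih v
            omega
          have hsKv : s ∈ K j v := by
            rw [hBv, Finset.mem_filter]
            exact ⟨hs.1, le_of_eq hdv⟩
          exact hsn (hT3 (by rw [hTX, hX]; exact Finset.mem_filter.mpr ⟨hsKv, hdv⟩))
    calc min d (S.filter (fun s => G.dist u s ≤ j+1)).card
        ≤ (S.filter (fun s => G.dist u s ≤ j+1)).card := min_le_right _ _
      _ ≤ (K (j+1) u).card := Finset.card_le_card hA
end

section
/- Let ε ≤ 1/10, ρ ≥ 10ε, and define R₀ = 0, R_{i+1} = (2/ρ)(1/ε)^i + (5/ρ)R_i. For any i ≥ 1, 6·ε^i·Σ_{j=1}^{i} R_j·2^{i−j} ≤ 30ε/ρ. -/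
/-!
Both estimates come from one principle: a sequence with `x (n+1) ≤ b + q * x n`, `q ≥ 0`, stays
below any `M ≥ x 0` with `b + q * M ≤ M`. Applied to `ε ^ j * R (j + 1)`, which satisfies
`x (j+1) = 2/ρ + (5ε/ρ) x j`, it gives `ε ^ j * R (j + 1) ≤ 4/ρ` because `5ε/ρ ≤ 1/2`. Applied to
`T i = ε ^ i * ∑ R j 2^(i-j)`, which satisfies `T (i+1) = 2ε T i + ε · ε ^ i R (i+1)`, it gives
`T i ≤ 5ε/ρ` because `2ε ≤ 1/5`.
-/

open Finset

theorem le_of_succ_le_add_mul {α : Type*} [Semiring α] [PartialOrder α] [IsOrderedRing α]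
    {x : ℕ → α} {b q M : α} (hq : 0 ≤ q) (hM : b + q * M ≤ M) (h0 : x 0 ≤ M)
    (hstep : ∀ n, x (n + 1) ≤ b + q * x n) : ∀ n, x n ≤ M
  | 0 => h0
  | n + 1 =>
    calc x (n + 1) ≤ b + q * x n := hstep n
      _ ≤ b + q * M := by gcongr; exact le_of_succ_le_add_mul hq hM h0 hstep n
      _ ≤ M := hM

theorem pow_mul_succ_eq_of_recurrence {ρ ε : ℝ} (hε : ε ≠ 0) {R : ℕ → ℝ}
    (hR : ∀ i : ℕ, R (i + 1) = (2 / ρ) * (1 / ε) ^ i + (5 / ρ) * R i) (j : ℕ) :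
    ε ^ (j + 1) * R (j + 1 + 1) = 2 / ρ + 5 * ε / ρ * (ε ^ j * R (j + 1)) := by
  rw [hR (j + 1), one_div, inv_pow]
  field_simp
  ring

theorem pow_mul_sum_Icc_succ (ε : ℝ) (R : ℕ → ℝ) (i : ℕ) :
    ε ^ (i + 1) * ∑ j ∈ Icc 1 (i + 1), R j * 2 ^ (i + 1 - j)
      = ε * (ε ^ i * R (i + 1)) + 2 * ε * (ε ^ i * ∑ j ∈ Icc 1 i, R j * 2 ^ (i - j)) := by
  have hshift : ∑ j ∈ Icc 1 i, R j * 2 ^ (i + 1 - j) = 2 * ∑ j ∈ Icc 1 i, R j * 2 ^ (i - j) := by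
    rw [mul_sum]
    refine sum_congr rfl fun j hj => ?_
    rw [Nat.sub_add_comm (mem_Icc.1 hj).2, pow_succ]
    ring
  rw [sum_Icc_succ_top (by omega), hshift, Nat.sub_self, pow_zero]
  ring

theorem stmt_13 (ρ ε : ℝ) (hρ : 0 < ρ) (hε : 0 < ε) (hε10 : ε ≤ 1 / 10)
    (hρε : ρ ≥ 10 * ε) (R : ℕ → ℝ)
    (hR0 : R 0 = 0)
    (hR : ∀ i : ℕ, R (i + 1) = (2 / ρ) * (1 / ε) ^ i + (5 / ρ) * R i) :
    ∀ i : ℕ, 1 ≤ i →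
      6 * ε ^ i * ∑ j ∈ Finset.Icc 1 i, R j * 2 ^ (i - j) ≤ 30 * ε / ρ := by
  have hscaled : ∀ j, ε ^ j * R (j + 1) ≤ 4 / ρ := by
    refine le_of_succ_le_add_mul (b := 2 / ρ) (q := 5 * ε / ρ) (by positivity) ?_ ?_
      fun j => (pow_mul_succ_eq_of_recurrence hε.ne' hR j).le
    · calc 2 / ρ + 5 * ε / ρ * (4 / ρ) = 2 / ρ * (1 + 10 * ε / ρ) := by ring
        _ ≤ 2 / ρ * 2 := by gcongr; linarith [(div_le_one hρ).2 hρε]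
        _ = 4 / ρ := by ring
    · norm_num [hR 0, hR0, div_le_div_iff_of_pos_right hρ]
  have hweighted : ∀ i, ε ^ i * ∑ j ∈ Icc 1 i, R j * 2 ^ (i - j) ≤ 5 * ε / ρ := by
    refine le_of_succ_le_add_mul (b := ε * (4 / ρ)) (q := 2 * ε) (by positivity) ?_
      (by simpa using (by positivity : (0 : ℝ) ≤ 5 * ε / ρ)) fun i => ?_
    · calc ε * (4 / ρ) + 2 * ε * (5 * ε / ρ) = ε / ρ * (4 + 10 * ε) := by ring
        _ ≤ ε / ρ * 5 := by gcongr; linarith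
        _ = 5 * ε / ρ := by ring
    · rw [pow_mul_sum_Icc_succ]
      gcongr
      exact hscaled i
  intro i _
  calc 6 * ε ^ i * ∑ j ∈ Icc 1 i, R j * 2 ^ (i - j)
      = 6 * (ε ^ i * ∑ j ∈ Icc 1 i, R j * 2 ^ (i - j)) := mul_assoc _ _ _
    _ ≤ 6 * (5 * ε / ρ) := by gcongr; exact hweighted i
    _ = 30 * ε / ρ := by ring
end
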